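/- arXiv:2404.02723 — 3 statements merged into one kernel-verified Lean document; each statement's English description precedes it below -/
import Mathlib

section
/- Let f_Z denote the density of the n-dimensional Gaussian N(0, σ²·I_n). For any measurable set D ⊆ ℝⁿ and any two points u₁, u₂ ∈ ℝⁿ with ‖u₁ − u₂‖₂ = d, the quantity ∫_D (f_Z(y − u₁) − f_Z(y − u₂)) dy is strictly less than Φ(d/(2σ)), where Φ is the standard normal CDF. -/
open MeasureTheory ProbabilityTheory Real Set
open scoped NNReal RealInnerProductSpace

/-!
The integrand is nonnegative exactly on the half-space `H` of points at least as close to `u₁`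
as to `u₂`, so the integral over `D` is at most the integral over `H`. Writing `e` for the unit
vector along `u₁ - u₂`, `H = {y | ⟪y - u₁, e⟫ ≥ -d/2} = {y | ⟪y - u₂, e⟫ ≥ d/2}`. The isotropic
Gaussian density is a product of one-dimensional densities and is invariant under the reflection
exchanging `e` with a coordinate vector, so its mass on such a half-space is a one-dimensional
Gaussian tail. Hence the integral over `H` is `P(N(0,σ²) ≥ -d/2) - P(N(0,σ²) ≥ d/2)`, and the
first term is `Φ(d/(2σ))` while the second is positive.
-/

lemma gaussianReal_Ici_neg_mul {σ : ℝ} (hσ : 0 < σ) (x : ℝ) :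
    gaussianReal 0 (.mk (σ ^ 2) (sq_nonneg σ)) (Ici (-(σ * x))) = gaussianReal 0 1 (Iic x) := by
  have hmap : (gaussianReal 0 1).map (-σ * ·) = gaussianReal 0 (.mk (σ ^ 2) (sq_nonneg σ)) := by
    rw [gaussianReal_map_const_mul]
    congr 1
    · ring
    · ext; simp
  rw [← hmap, Measure.map_apply (by fun_prop) measurableSet_Ici]
  congr 1
  ext t
  simp [mul_le_mul_iff_right₀ hσ]

lemma measureReal_gaussianReal_pos (μ : ℝ) {v : ℝ≥0} (hv : v ≠ 0) {s : Set ℝ}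
    (hs : volume s ≠ 0) : 0 < (gaussianReal μ v).real s :=
  ENNReal.toReal_pos (mt (gaussianReal_absolutelyContinuous' μ hv ·) hs) (measure_ne_top _ _)

lemma measureReal_gaussianReal_eq_setIntegral (μ : ℝ) {v : ℝ≥0} (hv : v ≠ 0) (s : Set ℝ) :
    (gaussianReal μ v).real s = ∫ t in s, gaussianPDFReal μ v t := by
  rw [measureReal_def, gaussianReal_apply_eq_integral μ hv,
    ENNReal.toReal_ofReal (setIntegral_nonneg_of_ae (ae_of_all _ (gaussianPDFReal_nonneg μ v)))]

lemma norm_sub_le_norm_sub_iff_le_inner {F : Type*} [NormedAddCommGroup F] [InnerProductSpace ℝ F]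
    {u₁ u₂ e y : F} {d : ℝ} (hd : 0 < d) (he : ‖e‖ = 1) (hu : u₁ - u₂ = d • e) :
    ‖y - u₁‖ ≤ ‖y - u₂‖ ↔ -(d / 2) ≤ ⟪y - u₁, e⟫ := by
  have hsplit : y - u₂ = (y - u₁) + d • e := by rw [← hu]; abel
  rw [← sq_le_sq₀ (norm_nonneg _) (norm_nonneg _), hsplit, norm_add_sq_real, inner_smul_right,
    norm_smul, he, Real.norm_of_nonneg hd.le]
  constructor <;> intro h <;> nlinarith

section Isotropic

variable {ι : Type*} [Fintype ι]

noncomputable def isotropicGaussianPDF (v : ℝ≥0) (z : EuclideanSpace ℝ ι) : ℝ :=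
  ∏ i, gaussianPDFReal 0 v (z i)

lemma isotropicGaussianPDF_eq (v : ℝ≥0) (z : EuclideanSpace ℝ ι) :
    isotropicGaussianPDF v z
      = (2 * π * v) ^ (-(Fintype.card ι : ℝ) / 2) * exp (-‖z‖ ^ 2 / (2 * v)) := by
  have hconst : (2 * π * v) ^ (-(Fintype.card ι : ℝ) / 2) = (√(2 * π * v))⁻¹ ^ Fintype.card ι := by
    rw [sqrt_eq_rpow, ← rpow_neg (by positivity), ← rpow_natCast, ← rpow_mul (by positivity)]
    ring_nf
  rw [isotropicGaussianPDF, hconst, EuclideanSpace.real_norm_sq_eq, neg_div, Finset.sum_div,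
    ← Finset.sum_neg_distrib, exp_sum, ← Finset.card_univ, ← Finset.prod_const,
    ← Finset.prod_mul_distrib]
  simp [gaussianPDFReal, neg_div]

lemma isotropicGaussianPDF_map_linearIsometryEquiv (v : ℝ≥0)
    (T : EuclideanSpace ℝ ι ≃ₗᵢ[ℝ] EuclideanSpace ℝ ι) (z : EuclideanSpace ℝ ι) :
    isotropicGaussianPDF v (T z) = isotropicGaussianPDF v z := by
  simp only [isotropicGaussianPDF_eq, T.norm_map]

lemma isotropicGaussianPDF_le_iff {v : ℝ≥0} (hv : v ≠ 0) {z z' : EuclideanSpace ℝ ι} :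
    isotropicGaussianPDF v z ≤ isotropicGaussianPDF v z' ↔ ‖z'‖ ≤ ‖z‖ := by
  rw [isotropicGaussianPDF_eq, isotropicGaussianPDF_eq, mul_le_mul_iff_right₀ (by positivity),
    exp_le_exp, div_le_div_iff_of_pos_right (by positivity), neg_le_neg_iff,
    sq_le_sq₀ (norm_nonneg _) (norm_nonneg _)]

lemma measurable_isotropicGaussianPDF (v : ℝ≥0) :
    Measurable (isotropicGaussianPDF (ι := ι) v) := by
  unfold isotropicGaussianPDF
  fun_prop

lemma integrable_isotropicGaussianPDF (v : ℝ≥0) :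
    Integrable (isotropicGaussianPDF (ι := ι) v) :=
  ((PiLp.volume_preserving_toLp ι).integrable_comp_emb
    (MeasurableEquiv.toLp 2 (ι → ℝ)).measurableEmbedding).mp
    (Integrable.fintype_prod fun _ ↦ integrable_gaussianPDFReal 0 v)

lemma setIntegral_isotropicGaussianPDF_eval_mem {v : ℝ≥0} (hv : v ≠ 0) (i₀ : ι) {s : Set ℝ}
    (hs : MeasurableSet s) :
    ∫ z in {z : EuclideanSpace ℝ ι | z i₀ ∈ s}, isotropicGaussianPDF v z
      = (gaussianReal 0 v).real s := by
  classical
  set φ := gaussianPDFReal 0 v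
  have hfactor (x : ι → ℝ) : {x : ι → ℝ | x i₀ ∈ s}.indicator (fun x ↦ ∏ i, φ (x i)) x
      = ∏ i, Function.update (fun _ ↦ φ) i₀ (s.indicator φ) i (x i) := by
    rw [Fintype.prod_eq_mul_prod_compl i₀, Function.update_self]
    by_cases hx : x i₀ ∈ s
    · rw [Set.indicator_of_mem (show x ∈ {x : ι → ℝ | x i₀ ∈ s} from hx),
        Set.indicator_of_mem hx, Fintype.prod_eq_mul_prod_compl i₀]
      congr 1
      exact Finset.prod_congr rfl fun i hi ↦ by rw [Function.update_of_ne (by simpa using hi)]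
    · simp [hx]
  rw [← (PiLp.volume_preserving_toLp ι).setIntegral_preimage_emb
    (MeasurableEquiv.toLp 2 (ι → ℝ)).measurableEmbedding (isotropicGaussianPDF v)]
  change ∫ x in {x : ι → ℝ | x i₀ ∈ s}, ∏ i, φ (x i) = _
  have hS : MeasurableSet {x : ι → ℝ | x i₀ ∈ s} := measurable_pi_apply i₀ hs
  rw [← integral_indicator hS]
  simp_rw [hfactor]
  rw [integral_fintype_prod_volume_eq_prod, Fintype.prod_eq_mul_prod_compl i₀,
    Function.update_self, integral_indicator hs, measureReal_gaussianReal_eq_setIntegral 0 hv,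
    Finset.prod_eq_one fun i hi ↦ ?_, mul_one]
  rw [Function.update_of_ne (by simpa using hi)]
  exact integral_gaussianPDFReal_eq_one 0 hv

lemma setIntegral_isotropicGaussianPDF_inner_mem {v : ℝ≥0} (hv : v ≠ 0)
    {e : EuclideanSpace ℝ ι} (he : ‖e‖ = 1) {s : Set ℝ} (hs : MeasurableSet s) :
    ∫ z in {z : EuclideanSpace ℝ ι | ⟪z, e⟫ ∈ s}, isotropicGaussianPDF v z
      = (gaussianReal 0 v).real s := by
  classical
  obtain ⟨i₀⟩ : Nonempty ι := by
    by_contra h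
    have : e = 0 := by ext i; exact (h ⟨i⟩).elim
    simp [this] at he
  set R := Submodule.reflection (ℝ ∙ (e - EuclideanSpace.single i₀ 1))ᗮ
  have hRe : R e = EuclideanSpace.single i₀ 1 := Submodule.reflection_sub (by simpa using he)
  have hpre : {z | ⟪z, e⟫ ∈ s} = R ⁻¹' {y | y i₀ ∈ s} := by
    ext z
    simp [← R.inner_map_map z e, hRe, EuclideanSpace.inner_single_right]
  rw [hpre, ← setIntegral_isotropicGaussianPDF_eval_mem hv i₀ hs,
    ← R.measurePreserving.setIntegral_preimage_emb R.toHomeomorph.measurableEmbedding _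
      {y | y i₀ ∈ s}]
  simp only [isotropicGaussianPDF_map_linearIsometryEquiv]

lemma setIntegral_isotropicGaussianPDF_sub_inner_mem {v : ℝ≥0} (hv : v ≠ 0)
    {e : EuclideanSpace ℝ ι} (he : ‖e‖ = 1) {s : Set ℝ} (hs : MeasurableSet s)
    (u : EuclideanSpace ℝ ι) :
    ∫ y in {y : EuclideanSpace ℝ ι | ⟪y - u, e⟫ ∈ s}, isotropicGaussianPDF v (y - u)
      = (gaussianReal 0 v).real s :=
  ((measurePreserving_sub_right volume u).setIntegral_preimage_emb
    (MeasurableEquiv.subRight u).measurableEmbedding _ _).trans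
    (setIntegral_isotropicGaussianPDF_inner_mem hv he hs)

lemma setIntegral_isotropicGaussianPDF_sub_le {v : ℝ≥0} (hv : v ≠ 0)
    {D : Set (EuclideanSpace ℝ ι)} (hD : MeasurableSet D) {u₁ u₂ e : EuclideanSpace ℝ ι} {d : ℝ}
    (hd : 0 < d) (he : ‖e‖ = 1) (hu : u₁ - u₂ = d • e) :
    ∫ y in D, (isotropicGaussianPDF v (y - u₁) - isotropicGaussianPDF v (y - u₂))
      ≤ (gaussianReal 0 v).real (Ici (-(d / 2))) - (gaussianReal 0 v).real (Ici (d / 2)) := by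
  set H := {y | 0 ≤ isotropicGaussianPDF v (y - u₁) - isotropicGaussianPDF v (y - u₂)}
  have hH₁ : H = {y | ⟪y - u₁, e⟫ ∈ Ici (-(d / 2))} := by
    ext y
    simp [H, isotropicGaussianPDF_le_iff hv, norm_sub_le_norm_sub_iff_le_inner hd he hu]
  have hH₂ : H = {y | ⟪y - u₂, e⟫ ∈ Ici (d / 2)} := by
    have hshift (y : EuclideanSpace ℝ ι) : ⟪y - u₁, e⟫ = ⟪y - u₂, e⟫ - d := by
      rw [show y - u₁ = y - u₂ - d • e by rw [← hu]; abel, inner_sub_left, real_inner_smul_left,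
        real_inner_self_eq_norm_sq, he, one_pow, mul_one]
    ext y
    simp only [hH₁, mem_ofPred_eq, mem_Ici, hshift]
    constructor <;> intro h <;> linarith
  have hmeas (u : EuclideanSpace ℝ ι) : Measurable fun y ↦ isotropicGaussianPDF v (y - u) :=
    (measurable_isotropicGaussianPDF v).comp (measurable_sub_const u)
  have hint (u : EuclideanSpace ℝ ι) : Integrable fun y ↦ isotropicGaussianPDF v (y - u) :=
    (integrable_isotropicGaussianPDF v).comp_sub_right u
  calc ∫ y in D, (isotropicGaussianPDF v (y - u₁) - isotropicGaussianPDF v (y - u₂))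
      ≤ ∫ y in H, (isotropicGaussianPDF v (y - u₁) - isotropicGaussianPDF v (y - u₂)) :=
        setIntegral_le_nonneg hD ((hmeas u₁).sub (hmeas u₂)).stronglyMeasurable
          ((hint u₁).sub (hint u₂))
    _ = (∫ y in H, isotropicGaussianPDF v (y - u₁)) - ∫ y in H, isotropicGaussianPDF v (y - u₂) :=
        integral_sub (hint u₁).integrableOn (hint u₂).integrableOn
    _ = _ := by
        nth_rw 1 [hH₁]
        rw [hH₂, setIntegral_isotropicGaussianPDF_sub_inner_mem hv he measurableSet_Ici,
          setIntegral_isotropicGaussianPDF_sub_inner_mem hv he measurableSet_Ici]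

end Isotropic

/-- Let `f_Z` be the density of the `n`-dimensional Gaussian `N(0, σ²·I_n)`. For any
measurable `D ⊆ ℝⁿ` and points `u₁, u₂` with `‖u₁ − u₂‖₂ = d`, the integral
`∫_D (f_Z(y − u₁) − f_Z(y − u₂)) dy` is strictly less than `Φ(d/(2σ))`. -/
theorem stmt_2 (n : ℕ) (σ d : ℝ) (hσ : 0 < σ)
    (D : Set (EuclideanSpace ℝ (Fin n))) (hD : MeasurableSet D)
    (u₁ u₂ : EuclideanSpace ℝ (Fin n)) (hd : ‖u₁ - u₂‖ = d)
    (fZ : EuclideanSpace ℝ (Fin n) → ℝ)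
    (hfZ : ∀ z, fZ z = (2 * Real.pi * σ ^ 2) ^ (-(n : ℝ) / 2)
      * Real.exp (-‖z‖ ^ 2 / (2 * σ ^ 2))) :
    (∫ y in D, (fZ (y - u₁) - fZ (y - u₂)))
      < (gaussianReal 0 1 (Set.Iic (d / (2 * σ)))).toReal := by
  set v : ℝ≥0 := .mk (σ ^ 2) (sq_nonneg σ)
  have hv : v ≠ 0 := by simp [v, ← NNReal.coe_ne_zero, hσ.ne']
  obtain rfl : fZ = isotropicGaussianPDF v := funext fun z ↦ by
    simp [hfZ, isotropicGaussianPDF_eq, v]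
  rcases (hd ▸ norm_nonneg _ : 0 ≤ d).eq_or_lt with rfl | hd0
  · obtain rfl : u₁ = u₂ := sub_eq_zero.mp (norm_eq_zero.mp hd)
    simp only [sub_self, setIntegral_const, smul_zero, zero_div]
    exact measureReal_gaussianReal_pos 0 one_ne_zero (by simp)
  set e := d⁻¹ • (u₁ - u₂)
  have hue : u₁ - u₂ = d • e := by simp [e, smul_smul, hd0.ne']
  have he : ‖e‖ = 1 := by simp [e, norm_smul, hd, hd0.ne', abs_of_pos hd0]
  calc _ ≤ (gaussianReal 0 v).real (Ici (-(d / 2))) - (gaussianReal 0 v).real (Ici (d / 2)) :=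
        setIntegral_isotropicGaussianPDF_sub_le hv hD hd0 he hue
    _ < (gaussianReal 0 v).real (Ici (-(d / 2))) :=
        sub_lt_self _ (measureReal_gaussianReal_pos 0 hv (by simp))
    _ = (gaussianReal 0 1 (Iic (d / (2 * σ)))).toReal := by
        rw [measureReal_def, ← gaussianReal_Ici_neg_mul hσ]
        congr
        field_simp
end

section
/- Consider a DI code for the AWGN channel with noise variance σ² > 0: codewords u₁, u₂ ∈ ℝⁿ and a decoding region D₁ ⊆ ℝⁿ satisfying ∫_{D₁} f_Z(y − u₁) dy ≥ 1 − λ₁ and ∫_{D₁} f_Z(y − u₂) dy ≤ λ₂, where f_Z is the density of N(0, σ²·I_n). Then Φ(‖u₁ − u₂‖₂/(2σ)) > 1 − (λ₁ + λ₂), where Φ is the standard normal CDF. In particular, if λ₁ + λ₂ < 1/2 then ‖u₁ − u₂‖₂ > 0, and as λ₁ + λ₂ → 0 the distance ‖u₁ − u₂‖₂ must tend to infinity. -/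
/-!
Let `f_u` be the density of `u + σZ` with `Z` standard Gaussian. Among all regions `D`, the
difference `∫_D f_{u₁} - ∫_D f_{u₂}` is largest on the half-space `H` where `f_{u₁} ≥ f_{u₂}`, i.e.
the points closer to `u₁` than to `u₂`. Projecting onto the unit vector along `u₂ - u₁` turns
`u + σZ ∈ H` into a one-dimensional Gaussian event, so the maximal difference is
`Φ(d/(2σ)) - Φ(-d/(2σ)) < Φ(d/(2σ))` with `d = ‖u₁ - u₂‖`. The density of `u + σZ` is identified
through characteristic functions.
-/

open MeasureTheory ProbabilityTheory Module Complex Set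
open scoped RealInnerProductSpace

theorem setIntegral_le_setIntegral_of_nonneg_on_of_nonpos_compl {α : Type*} [MeasurableSpace α]
    {μ : Measure α} {g : α → ℝ} {H : Set α} (hg : Integrable g μ) (hH : MeasurableSet H)
    (hpos : ∀ x ∈ H, 0 ≤ g x) (hneg : ∀ x ∉ H, g x ≤ 0) (s : Set α) :
    ∫ x in s, g x ∂μ ≤ ∫ x in H, g x ∂μ :=
  calc ∫ x in s, g x ∂μ ≤ ∫ x in s, H.indicator g x ∂μ := by
        refine setIntegral_mono hg.integrableOn (hg.indicator hH).integrableOn fun x => ?_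
        by_cases hx : x ∈ H
        · rw [indicator_of_mem hx]
        · rw [indicator_of_notMem hx]; exact hneg x hx
    _ ≤ ∫ x, H.indicator g x ∂μ :=
        setIntegral_le_integral (hg.indicator hH) (ae_of_all _ (indicator_nonneg hpos))
    _ = ∫ x in H, g x ∂μ := integral_indicator hH

lemma gaussianReal_Iic_pos (m : ℝ) {v : NNReal} (hv : v ≠ 0) (x : ℝ) :
    0 < (gaussianReal m v (Iic x)).toReal := by
  refine ENNReal.toReal_pos (fun h => ?_) (measure_ne_top _ _)
  simpa using gaussianReal_absolutelyContinuous' m hv h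

section InnerProductSpace

variable {V : Type*} [NormedAddCommGroup V] [InnerProductSpace ℝ V]

lemma norm_sub_le_norm_sub_iff_inner (x u v : V) :
    ‖x - u‖ ≤ ‖x - v‖ ↔ ⟪v - u, x⟫ ≤ (‖v‖ ^ 2 - ‖u‖ ^ 2) / 2 := by
  rw [← sq_le_sq₀ (norm_nonneg _) (norm_nonneg _), norm_sub_sq_real, norm_sub_sq_real,
    inner_sub_left, real_inner_comm x u, real_inner_comm x v]
  constructor <;> intro h <;> linarith

variable (V) in
/-- The density `f_Z` of `N(0, σ² I)` on `V`, with `n = finrank ℝ V`. -/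
noncomputable def isoGaussianPDF (σ : ℝ) (z : V) : ℝ :=
  (2 * Real.pi * σ ^ 2) ^ (-(finrank ℝ V : ℝ) / 2) * Real.exp (-‖z‖ ^ 2 / (2 * σ ^ 2))

lemma isoGaussianPDF_nonneg (σ : ℝ) (z : V) : 0 ≤ isoGaussianPDF V σ z := by
  unfold isoGaussianPDF; positivity

lemma isoGaussianPDF_le_iff {σ : ℝ} (hσ : σ ≠ 0) {x y : V} :
    isoGaussianPDF V σ x ≤ isoGaussianPDF V σ y ↔ ‖y‖ ≤ ‖x‖ := by
  unfold isoGaussianPDF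
  rw [mul_le_mul_iff_right₀ (Real.rpow_pos_of_pos (by positivity) _), Real.exp_le_exp,
    div_le_div_iff_of_pos_right (by positivity), neg_le_neg_iff,
    sq_le_sq₀ (norm_nonneg _) (norm_nonneg _)]

variable [FiniteDimensional ℝ V] [MeasurableSpace V] [BorelSpace V]

lemma integrable_isoGaussianPDF {σ : ℝ} (hσ : σ ≠ 0) : Integrable (isoGaussianPDF V σ) := by
  have hb : 0 < ((((2 * σ ^ 2)⁻¹ : ℝ)) : ℂ).re := by simp only [ofReal_re]; positivity
  refine ((GaussianFourier.integrable_cexp_neg_mul_sq_norm_add hb 0 (0 : V)).norm.const_mul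
    ((2 * Real.pi * σ ^ 2) ^ (-(finrank ℝ V : ℝ) / 2))).congr (ae_of_all _ fun z => ?_)
  simp only [zero_mul, add_zero]
  rw [show -(((2 * σ ^ 2)⁻¹ : ℝ) : ℂ) * (‖z‖ : ℂ) ^ 2
      = ((-(2 * σ ^ 2)⁻¹ * ‖z‖ ^ 2 : ℝ) : ℂ) by push_cast; ring, Complex.norm_exp_ofReal]
  unfold isoGaussianPDF
  congr 2
  field_simp

lemma integral_isoGaussianPDF_mul_cexp {σ : ℝ} (hσ : σ ≠ 0) (t : V) :
    ∫ z, (isoGaussianPDF V σ z : ℂ) * cexp (⟪z, t⟫ * I) = cexp (-(σ ^ 2 * ‖t‖ ^ 2) / 2) := by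
  set b : ℂ := (((2 * σ ^ 2)⁻¹ : ℝ) : ℂ)
  have hb : 0 < b.re := by simp only [b, ofReal_re]; positivity
  have hpdf : ∀ z : V, (isoGaussianPDF V σ z : ℂ) * cexp (⟪z, t⟫ * I)
      = ((2 * Real.pi * σ ^ 2) ^ (-(finrank ℝ V : ℝ) / 2) : ℝ)
        * cexp (-b * ‖z‖ ^ 2 + I * ⟪t, z⟫) := by
    intro z
    simp only [isoGaussianPDF, ofReal_mul, ofReal_exp, mul_assoc, ← Complex.exp_add, b]
    congr 2
    push_cast
    rw [real_inner_comm]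
    ring
  have hπb : (Real.pi : ℂ) / b = ((2 * Real.pi * σ ^ 2 : ℝ) : ℂ) := by
    simp only [b]; push_cast; field_simp
  have hpos : 0 < 2 * Real.pi * σ ^ 2 := by positivity
  simp_rw [hpdf]
  rw [integral_const_mul, GaussianFourier.integral_cexp_neg_mul_sq_norm_add hb, hπb,
    ← ofReal_natCast, ← ofReal_ofNat, ← ofReal_div, ← ofReal_cpow hpos.le, ← mul_assoc,
    ← ofReal_mul, ← Real.rpow_add hpos, neg_div, neg_add_cancel, Real.rpow_zero, ofReal_one,
    one_mul]
  congr 1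
  simp only [b, I_sq]
  push_cast
  field_simp
  ring

lemma withDensity_isoGaussianPDF {σ : ℝ} (hσ : σ ≠ 0) (u : V) :
    volume.withDensity (fun y => ENNReal.ofReal (isoGaussianPDF V σ (y - u)))
      = (stdGaussian V).map (fun z => u + σ • z) := by
  have := isFiniteMeasure_withDensity_ofReal
    ((integrable_isoGaussianPDF (V := V) hσ).comp_sub_right u).2
  have hmap : (stdGaussian V).map (fun z => u + σ • z)
      = ((stdGaussian V).map (σ • ·)).map (u + ·) := by
    rw [Measure.map_map (by fun_prop) (by fun_prop)]; rfl
  refine Measure.ext_of_charFun (funext fun t => ?_)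
  rw [hmap, charFun_map_const_add, charFun_map_smul, charFun_stdGaussian, charFun_apply,
    integral_withDensity_eq_integral_toReal_smul (by unfold isoGaussianPDF; fun_prop)
      (ae_of_all _ fun _ => ENNReal.ofReal_lt_top)]
  simp_rw [ENNReal.toReal_ofReal (isoGaussianPDF_nonneg _ _), Complex.real_smul]
  let G z := (isoGaussianPDF V σ z : ℂ) * cexp (⟪z, t⟫ * I) * cexp (⟪u, t⟫ * I)
  have hshift : ∀ y, (isoGaussianPDF V σ (y - u) : ℂ) * cexp (⟪y, t⟫ * I) = G (y - u) := by
    intro y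
    simp only [G, mul_assoc, ← Complex.exp_add, inner_sub_left, ofReal_sub]
    ring_nf
  rw [integral_congr_ae (ae_of_all _ hshift), integral_sub_right_eq_self G u, integral_mul_const,
    integral_isoGaussianPDF_mul_cexp hσ, norm_smul]
  simp only [Real.norm_eq_abs, ofReal_mul, mul_pow, ← ofReal_pow, sq_abs]

lemma setIntegral_isoGaussianPDF_sub {σ : ℝ} (hσ : σ ≠ 0) (u : V) {S : Set V}
    (hS : MeasurableSet S) :
    ∫ y in S, isoGaussianPDF V σ (y - u) = (stdGaussian V {z | u + σ • z ∈ S}).toReal := by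
  rw [integral_eq_lintegral_of_nonneg_ae (ae_of_all _ fun _ => isoGaussianPDF_nonneg _ _)
    (by unfold isoGaussianPDF; fun_prop), ← withDensity_apply' _ S,
    withDensity_isoGaussianPDF hσ u, Measure.map_apply (by fun_prop) hS]
  rfl

lemma stdGaussian_map_innerSL (w : V) :
    (stdGaussian V).map (innerSL ℝ w) = gaussianReal 0 (‖w‖₊ ^ 2) := by
  rw [IsGaussian.map_eq_gaussianReal, integral_strongDual_stdGaussian, variance_dual_stdGaussian,
    innerSL_apply_norm]
  congr
  ext
  simp

lemma stdGaussian_setOf_inner_le {w : V} (hw : ‖w‖ = 1) (c : ℝ) :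
    stdGaussian V {z | ⟪w, z⟫ ≤ c} = gaussianReal 0 1 (Iic c) := by
  have hw' : ‖w‖₊ = 1 := NNReal.eq hw
  rw [← one_pow 2, ← hw', ← stdGaussian_map_innerSL,
    Measure.map_apply (by fun_prop) measurableSet_Iic]
  rfl

lemma stdGaussian_setOf_inner_add_smul_le {σ : ℝ} (hσ : 0 < σ) {a : V} (ha : a ≠ 0)
    (u : V) (c : ℝ) :
    stdGaussian V {z | ⟪a, u + σ • z⟫ ≤ c}
      = gaussianReal 0 1 (Iic ((c - ⟪a, u⟫) / (σ * ‖a‖))) := by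
  have hna : 0 < ‖a‖ := norm_pos_iff.2 ha
  have hw : ‖‖a‖⁻¹ • a‖ = 1 := by rw [norm_smul, norm_inv, norm_norm, inv_mul_cancel₀ hna.ne']
  rw [← stdGaussian_setOf_inner_le hw]
  congr 1
  ext z
  simp only [mem_ofPred_eq, inner_add_right, real_inner_smul_left, real_inner_smul_right]
  rw [inv_mul_eq_div, div_le_div_iff₀ hna (by positivity), mul_comm σ, ← mul_assoc,
    mul_le_mul_iff_left₀ hna]
  constructor <;> intro h <;> linarith

lemma setIntegral_isoGaussianPDF_sub_setOf_inner_le {σ : ℝ} (hσ : 0 < σ) {a : V} (ha : a ≠ 0)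
    (u : V) (c : ℝ) :
    ∫ y in {y | ⟪a, y⟫ ≤ c}, isoGaussianPDF V σ (y - u)
      = (gaussianReal 0 1 (Iic ((c - ⟪a, u⟫) / (σ * ‖a‖)))).toReal := by
  rw [setIntegral_isoGaussianPDF_sub hσ.ne' u (measurableSet_le (by fun_prop) measurable_const),
    ← stdGaussian_setOf_inner_add_smul_le hσ ha]
  rfl

theorem setIntegral_isoGaussianPDF_sub_sub_lt {σ : ℝ} (hσ : 0 < σ) (u₁ u₂ : V) (D : Set V) :
    (∫ y in D, isoGaussianPDF V σ (y - u₁)) - ∫ y in D, isoGaussianPDF V σ (y - u₂)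
      < (gaussianReal 0 1 (Iic (‖u₁ - u₂‖ / (2 * σ)))).toReal := by
  rcases eq_or_ne u₁ u₂ with rfl | hne
  · rw [sub_self, sub_self, norm_zero, zero_div]
    exact gaussianReal_Iic_pos 0 one_ne_zero 0
  set f := isoGaussianPDF V σ
  set a := u₂ - u₁
  set c := (‖u₂‖ ^ 2 - ‖u₁‖ ^ 2) / 2
  set H := {y : V | ⟪a, y⟫ ≤ c}
  have ha : a ≠ 0 := sub_ne_zero.2 hne.symm
  have hint (u : V) : Integrable (fun y => f (y - u)) :=
    (integrable_isoGaussianPDF hσ.ne').comp_sub_right u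
  have hmem (y : V) : y ∈ H ↔ f (y - u₂) ≤ f (y - u₁) := by
    rw [isoGaussianPDF_le_iff hσ.ne', norm_sub_le_norm_sub_iff_inner]; rfl
  have hc₁ : c - ⟪a, u₁⟫ = ‖a‖ ^ 2 / 2 := by
    simp only [c, a, norm_sub_sq_real, inner_sub_left, real_inner_self_eq_norm_sq,
      real_inner_comm u₁ u₂]
    ring
  have hc₂ : c - ⟪a, u₂⟫ = -(‖a‖ ^ 2 / 2) := by
    simp only [c, a, norm_sub_sq_real, inner_sub_left, real_inner_self_eq_norm_sq,
      real_inner_comm u₁ u₂]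
    ring
  have hd : ‖u₁ - u₂‖ / (2 * σ) = ‖a‖ ^ 2 / 2 / (σ * ‖a‖) := by
    rw [show ‖u₁ - u₂‖ = ‖a‖ from norm_sub_rev u₁ u₂]; field_simp [(norm_pos_iff.2 ha).ne']
  calc (∫ y in D, f (y - u₁)) - ∫ y in D, f (y - u₂)
      = ∫ y in D, (f (y - u₁) - f (y - u₂)) :=
        (integral_sub (hint u₁).integrableOn (hint u₂).integrableOn).symm
    _ ≤ ∫ y in H, (f (y - u₁) - f (y - u₂)) :=
        setIntegral_le_setIntegral_of_nonneg_on_of_nonpos_compl ((hint u₁).sub (hint u₂))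
          (measurableSet_le (by fun_prop) measurable_const)
          (fun y hy => sub_nonneg.2 ((hmem y).1 hy))
          (fun y hy => (sub_neg.2 (not_le.1 (mt (hmem y).2 hy))).le) D
    _ = (gaussianReal 0 1 (Iic (‖u₁ - u₂‖ / (2 * σ)))).toReal
          - (gaussianReal 0 1 (Iic (-(‖u₁ - u₂‖ / (2 * σ))))).toReal := by
        rw [integral_sub (hint u₁).integrableOn (hint u₂).integrableOn,
          setIntegral_isoGaussianPDF_sub_setOf_inner_le hσ ha,
          setIntegral_isoGaussianPDF_sub_setOf_inner_le hσ ha, hc₁, hc₂, hd, neg_div]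
    _ < (gaussianReal 0 1 (Iic (‖u₁ - u₂‖ / (2 * σ)))).toReal :=
        sub_lt_self _ (gaussianReal_Iic_pos 0 one_ne_zero _)

end InnerProductSpace

theorem stmt_3_general (n : ℕ) (σ l₁ l₂ : ℝ) (hσ : 0 < σ)
    (u₁ u₂ : EuclideanSpace ℝ (Fin n))
    (D₁ : Set (EuclideanSpace ℝ (Fin n)))
    (fZ : EuclideanSpace ℝ (Fin n) → ℝ)
    (hfZ : ∀ z, fZ z = (2 * Real.pi * σ ^ 2) ^ (-(n : ℝ) / 2)
      * Real.exp (-‖z‖ ^ 2 / (2 * σ ^ 2)))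
    (h1 : 1 - l₁ ≤ ∫ y in D₁, fZ (y - u₁))
    (h2 : (∫ y in D₁, fZ (y - u₂)) ≤ l₂) :
    1 - (l₁ + l₂) < (gaussianReal 0 1 (Set.Iic (‖u₁ - u₂‖ / (2 * σ)))).toReal
      ∧ (l₁ + l₂ < 1 / 2 → 0 < ‖u₁ - u₂‖) := by
  obtain rfl : fZ = isoGaussianPDF (EuclideanSpace ℝ (Fin n)) σ :=
    funext fun z => by rw [hfZ, isoGaussianPDF, finrank_euclideanSpace_fin]
  refine ⟨by linarith [setIntegral_isoGaussianPDF_sub_sub_lt hσ u₁ u₂ D₁], fun hl => ?_⟩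
  refine norm_pos_iff.2 (sub_ne_zero.2 fun hu => ?_)
  subst hu
  linarith

/-- Minimum-distance bound for DI codes on the AWGN channel: if the decoding region `D₁`
accepts codeword `u₁` with probability at least `1 − l₁` and accepts `u₂` with probability
at most `l₂`, then `Φ(‖u₁ − u₂‖/(2σ)) > 1 − (l₁ + l₂)`.  In particular, if
`l₁ + l₂ < 1/2` then `‖u₁ − u₂‖ > 0`. -/
theorem stmt_3 (n : ℕ) (σ l₁ l₂ : ℝ) (hσ : 0 < σ)
    (hl₁ : l₁ ∈ Set.Ioo (0 : ℝ) 1) (hl₂ : l₂ ∈ Set.Ioo (0 : ℝ) 1)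
    (u₁ u₂ : EuclideanSpace ℝ (Fin n))
    (D₁ : Set (EuclideanSpace ℝ (Fin n))) (hD₁ : MeasurableSet D₁)
    (fZ : EuclideanSpace ℝ (Fin n) → ℝ)
    (hfZ : ∀ z, fZ z = (2 * Real.pi * σ ^ 2) ^ (-(n : ℝ) / 2)
      * Real.exp (-‖z‖ ^ 2 / (2 * σ ^ 2)))
    (h1 : 1 - l₁ ≤ ∫ y in D₁, fZ (y - u₁))
    (h2 : (∫ y in D₁, fZ (y - u₂)) ≤ l₂) :
    1 - (l₁ + l₂) < (gaussianReal 0 1 (Set.Iic (‖u₁ - u₂‖ / (2 * σ)))).toReal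
      ∧ (l₁ + l₂ < 1 / 2 → 0 < ‖u₁ - u₂‖) :=
  stmt_3_general n σ l₁ l₂ hσ u₁ u₂ D₁ fZ hfZ h1 h2
end

section
/- Fix constants a ∈ (0, 1/8), b ∈ (a, 2a), A > 0, and ε₁, ε₂ ∈ (0,1) with (1/4 − b)(1 − ε₁)(1 − ε₂) > 1/4 − 2a. Suppose for all large n there is a code C ⊆ Q^n over an alphabet Q of q₁ = Θ(n^{1/4−b}) equally spaced points in [−√A, √A], with Hamming distance ≥ ε₁ε₂n and size q₁^{(1−ε₁)(1−ε₂)n}. Then C, viewed as a subset of ℝⁿ, satisfies: (i) ‖u‖₂² ≤ An for all u ∈ C; (ii) ‖u − v‖₂ ≥ 2√(Aε₁ε₂)·n^{1/4 + b}·(1+o(1)) ≥ n^{1/4+a} for large n and all distinct u, v ∈ C; (iii) |C| ≥ n^{(1/4 − 2a)n} for large n. -/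
open Filter
open scoped Classical

lemma coord_abs' (A : ℝ) (m : ℕ) (j : Fin m) :
    |(-Real.sqrt A + 2 * Real.sqrt A * (j : ℝ) / ((m : ℝ) - 1))| ≤ Real.sqrt A := by
  have hs : 0 ≤ Real.sqrt A := Real.sqrt_nonneg A
  rcases lt_or_ge m 2 with hm | hm
  · match m, j with
    | 0, j => exact j.elim0
    | 1, j =>
      have h0 : ((j : ℕ) : ℝ) = 0 := by
        have hj := j.is_lt
        have : (j : ℕ) = 0 := by omega
        exact_mod_cast this
      rw [h0]
      simp [abs_of_nonpos (neg_nonpos.2 hs)]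
  · have hm1 : (0:ℝ) < (m : ℝ) - 1 := by
      have : (2:ℝ) ≤ (m:ℝ) := by exact_mod_cast hm
      linarith
    have hj0 : (0:ℝ) ≤ (j : ℝ) := by positivity
    have hj1 : (j : ℝ) ≤ (m : ℝ) - 1 := by
      have : (j:ℝ) + 1 ≤ (m:ℝ) := by exact_mod_cast Nat.succ_le_of_lt j.is_lt
      linarith
    rw [abs_le]
    constructor
    · have : 0 ≤ 2 * Real.sqrt A * (j:ℝ) / ((m:ℝ) - 1) := by positivity
      linarith
    · have h2 : 2 * Real.sqrt A * (j:ℝ) / ((m:ℝ)-1) ≤ 2 * Real.sqrt A := by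
        rw [div_le_iff₀ hm1]
        nlinarith
      linarith

lemma spacing' (A : ℝ) (hA : 0 < A) (m : ℕ) (hm : 2 ≤ m) (j k : Fin m) (hjk : (j:ℝ) ≠ (k:ℝ)) :
    4 * A / ((m:ℝ)-1)^2 ≤
      ((-Real.sqrt A + 2 * Real.sqrt A * (j : ℝ) / ((m : ℝ) - 1)) -
       (-Real.sqrt A + 2 * Real.sqrt A * (k : ℝ) / ((m : ℝ) - 1)))^2 := by
  have hm1 : (0:ℝ) < (m : ℝ) - 1 := by
    have : (2:ℝ) ≤ (m:ℝ) := by exact_mod_cast hm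
    linarith
  have hsq : ((j:ℝ) - (k:ℝ))^2 ≥ 1 := by
    have hne : (j:ℕ) ≠ (k:ℕ) := by exact_mod_cast hjk
    rcases hne.lt_or_gt with h | h
    · have : (j:ℝ) + 1 ≤ (k:ℝ) := by exact_mod_cast h
      nlinarith
    · have : (k:ℝ) + 1 ≤ (j:ℝ) := by exact_mod_cast h
      nlinarith
  have hA' : Real.sqrt A ^ 2 = A := Real.sq_sqrt hA.le
  have key : ((-Real.sqrt A + 2 * Real.sqrt A * (j : ℝ) / ((m : ℝ) - 1)) -
       (-Real.sqrt A + 2 * Real.sqrt A * (k : ℝ) / ((m : ℝ) - 1)))^2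
      = 4 * A / ((m:ℝ)-1)^2 * ((j:ℝ)-(k:ℝ))^2 := by
    field_simp
    ring_nf
    nlinarith [hA']
  rw [key]
  nlinarith [div_pos (by linarith : (0:ℝ) < 4*A) (pow_pos hm1 2)]

set_option maxHeartbeats 1000000 in
/-- Codes over `q₁ = Θ(n^{1/4−b})` equally spaced points in `[−√A, √A]` with relative Hamming
distance `ε₁ε₂` and size `q₁^{(1−ε₁)(1−ε₂)n}` satisfy, as subsets of ℝⁿ:
(i) the power constraint `‖u‖₂² ≤ A·n`; (ii) pairwise Euclidean distance at least
`n^{1/4+a}` for large `n`; (iii) size at least `n^{(1/4−2a)n}` for large `n`. -/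
theorem stmt_15 (a b A ε₁ ε₂ : ℝ) (ha : 0 < a) (ha8 : a < 1 / 8)
    (hab : a < b) (hb2a : b < 2 * a) (hA : 0 < A)
    (hε₁ : ε₁ ∈ Set.Ioo (0 : ℝ) 1) (hε₂ : ε₂ ∈ Set.Ioo (0 : ℝ) 1)
    (hexp : 1 / 4 - 2 * a < (1 / 4 - b) * (1 - ε₁) * (1 - ε₂))
    (q : ℕ → ℕ) (C : (n : ℕ) → Set (Fin n → ℝ))
    (hq : ∀ᶠ n : ℕ in atTop, 2 ≤ q n ∧
      (n : ℝ) ^ ((1 : ℝ) / 4 - b) / 2 ≤ (q n : ℝ) ∧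
      (q n : ℝ) ≤ (n : ℝ) ^ ((1 : ℝ) / 4 - b))
    (hmem : ∀ n, ∀ u ∈ C n, ∀ i, ∃ j : Fin (q n),
      u i = -Real.sqrt A + 2 * Real.sqrt A * (j : ℝ) / ((q n : ℝ) - 1))
    (hdist : ∀ n, ∀ u ∈ C n, ∀ v ∈ C n, u ≠ v → ε₁ * ε₂ * n ≤ hammingDist u v)
    (hsize : ∀ n, (q n : ℝ) ^ ((1 - ε₁) * (1 - ε₂) * n) ≤ Nat.card (C n)) :
    (∀ n, ∀ u ∈ C n, (∑ i, (u i) ^ 2) ≤ A * n) ∧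
    (∀ᶠ n : ℕ in atTop, ∀ u ∈ C n, ∀ v ∈ C n, u ≠ v →
      (n : ℝ) ^ ((1 : ℝ) / 4 + a) ≤ Real.sqrt (∑ i, (u i - v i) ^ 2)) ∧
    (∀ᶠ n : ℕ in atTop, (n : ℝ) ^ ((1 / 4 - 2 * a) * n) ≤ Nat.card (C n)) := by
  obtain ⟨hε₁0, hε₁1⟩ := hε₁
  obtain ⟨hε₂0, hε₂1⟩ := hε₂
  -- coordinate bound
  have hcoord : ∀ n, ∀ u ∈ C n, ∀ i, (u i)^2 ≤ A := by
    intro n u hu i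
    obtain ⟨j, hj⟩ := hmem n u hu i
    have h1 : |u i| ≤ Real.sqrt A := hj ▸ coord_abs' A (q n) j
    have h2 : (u i)^2 = |u i|^2 := (sq_abs _).symm
    rw [h2]
    calc |u i|^2 ≤ (Real.sqrt A)^2 := by
          nlinarith [abs_nonneg (u i), Real.sqrt_nonneg A]
      _ = A := Real.sq_sqrt hA.le
  refine ⟨?_, ?_, ?_⟩
  · -- part (i)
    intro n u hu
    calc ∑ i, (u i)^2 ≤ ∑ _i : Fin n, A := Finset.sum_le_sum (fun i _ => hcoord n u hu i)
      _ = A * n := by simp [mul_comm]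
  · -- part (ii)
    have hba : (0:ℝ) < 2 * (b - a) := by linarith
    have hT : Tendsto (fun n : ℕ => (n:ℝ) ^ (2 * (b - a))) atTop atTop :=
      (tendsto_rpow_atTop hba).comp tendsto_natCast_atTop_atTop
    filter_upwards [hq, hT.eventually_ge_atTop (1 / (4 * A * ε₁ * ε₂)),
      eventually_ge_atTop 1] with n ⟨hq2, hqlo, hqhi⟩ hbig hn1 u hu v hv huv
    have hn0 : (0:ℝ) < (n:ℝ) := by exact_mod_cast hn1
    have hm1 : (0:ℝ) < (q n : ℝ) - 1 := by
      have : (2:ℝ) ≤ (q n : ℝ) := by exact_mod_cast hq2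
      linarith
    -- sum lower bound via Hamming distance
    have hsumlb : (hammingDist u v : ℝ) * (4 * A / ((q n:ℝ)-1)^2) ≤ ∑ i, (u i - v i)^2 := by
      have hsub : ∑ i ∈ ({i | u i ≠ v i} : Finset (Fin n)), (u i - v i)^2 ≤
          ∑ i, (u i - v i)^2 :=
        Finset.sum_le_sum_of_subset_of_nonneg (Finset.subset_univ _)
          (fun i _ _ => sq_nonneg _)
      have hcard : (hammingDist u v) • (4 * A / ((q n:ℝ)-1)^2) ≤
          ∑ i ∈ ({i | u i ≠ v i} : Finset (Fin n)), (u i - v i)^2 := by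
        apply Finset.card_nsmul_le_sum
        intro i hi
        have hine : u i ≠ v i := by simpa using hi
        obtain ⟨j, hj⟩ := hmem n u hu i
        obtain ⟨k, hk⟩ := hmem n v hv i
        have hjk : (j:ℝ) ≠ (k:ℝ) := by
          intro h
          apply hine
          rw [hj, hk, h]
        rw [hj, hk]
        exact spacing' A hA (q n) hq2 j k hjk
      rw [nsmul_eq_mul] at hcard
      unfold hammingDist
      exact le_trans hcard hsub
    have hham : ε₁ * ε₂ * n ≤ (hammingDist u v : ℝ) := hdist n u hu v hv huv
    have hq2' : ((q n:ℝ)-1)^2 ≤ (n:ℝ) ^ ((1:ℝ)/2 - 2*b) := by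
      have h1 : ((q n:ℝ)-1)^2 ≤ ((n:ℝ) ^ ((1:ℝ)/4 - b))^2 := by
        have : (q n : ℝ) - 1 ≤ (n:ℝ) ^ ((1:ℝ)/4 - b) := by linarith
        nlinarith
      calc ((q n:ℝ)-1)^2 ≤ ((n:ℝ) ^ ((1:ℝ)/4 - b))^2 := h1
        _ = (n:ℝ) ^ ((1:ℝ)/2 - 2*b) := by
            rw [← Real.rpow_natCast ((n:ℝ) ^ ((1:ℝ)/4 - b)) 2, ← Real.rpow_mul hn0.le]
            norm_num
            ring_nf
    -- main numeric chain
    have hS : (n:ℝ) ^ ((1:ℝ)/2 + 2*a) ≤ ∑ i, (u i - v i)^2 := by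
      have hc : 4 * A / ((n:ℝ) ^ ((1:ℝ)/2 - 2*b)) ≤ 4 * A / ((q n:ℝ)-1)^2 :=
        div_le_div_of_nonneg_left (by linarith) (pow_pos hm1 2) hq2'
      have hstep : ε₁ * ε₂ * n * (4 * A / ((n:ℝ) ^ ((1:ℝ)/2 - 2*b))) ≤
          (hammingDist u v : ℝ) * (4 * A / ((q n:ℝ)-1)^2) := by
        have hpos : 0 ≤ 4 * A / ((n:ℝ) ^ ((1:ℝ)/2 - 2*b)) := by positivity
        have h1 : ε₁ * ε₂ * n * (4 * A / ((n:ℝ) ^ ((1:ℝ)/2 - 2*b))) ≤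
            (hammingDist u v : ℝ) * (4 * A / ((n:ℝ) ^ ((1:ℝ)/2 - 2*b))) :=
          mul_le_mul_of_nonneg_right hham hpos
        have h2 : (hammingDist u v : ℝ) * (4 * A / ((n:ℝ) ^ ((1:ℝ)/2 - 2*b))) ≤
            (hammingDist u v : ℝ) * (4 * A / ((q n:ℝ)-1)^2) :=
          mul_le_mul_of_nonneg_left hc (Nat.cast_nonneg _)
        linarith
      have hdivn : (n:ℝ) / (n:ℝ) ^ ((1:ℝ)/2 - 2*b) = (n:ℝ) ^ ((1:ℝ)/2 + 2*b) := by
        have h := Real.rpow_sub hn0 1 ((1:ℝ)/2 - 2*b)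
        rw [Real.rpow_one] at h
        rw [← h]
        norm_num
        ring_nf
      have hval : ε₁ * ε₂ * n * (4 * A / ((n:ℝ) ^ ((1:ℝ)/2 - 2*b))) =
          4 * A * ε₁ * ε₂ * (n:ℝ) ^ ((1:ℝ)/2 + 2*b) := by
        rw [← hdivn]
        ring
      have hfin : (n:ℝ) ^ ((1:ℝ)/2 + 2*a) ≤ 4 * A * ε₁ * ε₂ * (n:ℝ) ^ ((1:ℝ)/2 + 2*b) := by
        have hsplit : (n:ℝ) ^ ((1:ℝ)/2 + 2*b) =
            (n:ℝ) ^ (2*(b-a)) * (n:ℝ) ^ ((1:ℝ)/2 + 2*a) := by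
          rw [← Real.rpow_add hn0]; ring_nf
        rw [hsplit]
        have hb1 : 1 / (4 * A * ε₁ * ε₂) ≤ (n:ℝ) ^ (2*(b-a)) := hbig
        have hpos4 : (0:ℝ) < 4 * A * ε₁ * ε₂ := by positivity
        have : 1 ≤ 4 * A * ε₁ * ε₂ * (n:ℝ) ^ (2*(b-a)) := by
          rw [div_le_iff₀ hpos4] at hb1
          linarith [hb1]
        calc (n:ℝ) ^ ((1:ℝ)/2 + 2*a)
            = 1 * (n:ℝ) ^ ((1:ℝ)/2 + 2*a) := (one_mul _).symm
          _ ≤ (4 * A * ε₁ * ε₂ * (n:ℝ) ^ (2*(b-a))) * (n:ℝ) ^ ((1:ℝ)/2 + 2*a) :=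
              mul_le_mul_of_nonneg_right this (Real.rpow_nonneg hn0.le _)
          _ = 4 * A * ε₁ * ε₂ * ((n:ℝ) ^ (2*(b-a)) * (n:ℝ) ^ ((1:ℝ)/2 + 2*a)) := by ring
      calc (n:ℝ) ^ ((1:ℝ)/2 + 2*a) ≤ 4 * A * ε₁ * ε₂ * (n:ℝ) ^ ((1:ℝ)/2 + 2*b) := hfin
        _ = ε₁ * ε₂ * n * (4 * A / ((n:ℝ) ^ ((1:ℝ)/2 - 2*b))) := hval.symm
        _ ≤ (hammingDist u v : ℝ) * (4 * A / ((q n:ℝ)-1)^2) := hstep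
        _ ≤ ∑ i, (u i - v i)^2 := hsumlb
    have hx : (0:ℝ) < (n:ℝ) ^ ((1:ℝ)/4 + a) := Real.rpow_pos_of_pos hn0 _
    rw [Real.le_sqrt' hx]
    calc ((n:ℝ) ^ ((1:ℝ)/4 + a))^2 = (n:ℝ) ^ ((1:ℝ)/2 + 2*a) := by
          rw [← Real.rpow_natCast ((n:ℝ) ^ ((1:ℝ)/4 + a)) 2, ← Real.rpow_mul hn0.le]
          norm_num; ring_nf
      _ ≤ ∑ i, (u i - v i)^2 := hS
  · -- part (iii)
    have hc0 : 0 < (1 - ε₁) * (1 - ε₂) := by nlinarith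
    have hδ : 0 < (1 - ε₁) * (1 - ε₂) * (1/4 - b) - (1/4 - 2*a) := by nlinarith [hexp]
    have hT : Tendsto
        (fun n : ℕ => ((1 - ε₁) * (1 - ε₂) * (1/4 - b) - (1/4 - 2*a)) * Real.log n)
        atTop atTop :=
      (Real.tendsto_log_atTop.comp tendsto_natCast_atTop_atTop).const_mul_atTop hδ
    filter_upwards [hq, hT.eventually_ge_atTop ((1 - ε₁) * (1 - ε₂) * Real.log 2),
      eventually_ge_atTop 1] with n ⟨hq2, hqlo, hqhi⟩ hlog hn1
    have hn0 : (0:ℝ) < (n:ℝ) := by exact_mod_cast hn1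
    have hbase : (0:ℝ) < (n:ℝ) ^ ((1:ℝ)/4 - b) / 2 := by positivity
    have step1 : ((n:ℝ) ^ ((1:ℝ)/4 - b) / 2) ^ ((1 - ε₁) * (1 - ε₂) * n) ≤
        (q n : ℝ) ^ ((1 - ε₁) * (1 - ε₂) * n) :=
      Real.rpow_le_rpow hbase.le hqlo (by positivity)
    have step2 : (n:ℝ) ^ ((1/4 - 2*a) * n) ≤
        ((n:ℝ) ^ ((1:ℝ)/4 - b) / 2) ^ ((1 - ε₁) * (1 - ε₂) * n) := by
      rw [← Real.log_le_log_iff (Real.rpow_pos_of_pos hn0 _) (Real.rpow_pos_of_pos hbase _),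
        Real.log_rpow hn0, Real.log_rpow hbase]
      have hlogbase : Real.log ((n:ℝ) ^ ((1:ℝ)/4 - b) / 2) =
          ((1:ℝ)/4 - b) * Real.log n - Real.log 2 := by
        rw [Real.log_div (by positivity) (by norm_num), Real.log_rpow hn0]
      rw [hlogbase]
      have hkey : (1/4 - 2*a) * Real.log n ≤
          (1 - ε₁) * (1 - ε₂) * (((1:ℝ)/4 - b) * Real.log n - Real.log 2) := by
        nlinarith [hlog]
      nlinarith [hkey, hn0.le]
    calc (n:ℝ) ^ ((1/4 - 2*a) * n)
        ≤ ((n:ℝ) ^ ((1:ℝ)/4 - b) / 2) ^ ((1 - ε₁) * (1 - ε₂) * n) := step2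
      _ ≤ (q n : ℝ) ^ ((1 - ε₁) * (1 - ε₂) * n) := step1
      _ ≤ Nat.card (C n) := hsize n
end
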